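/- arXiv:1712.07090 — 5 statements merged into one kernel-verified Lean document; each statement's English description precedes it below -/
import Mathlib

section
/- Let m, n₁, …, n_m be positive integers and let X₁, …, X_m be Banach spaces over 𝕂 ∈ {ℝ, ℂ}. Then every continuous (n₁,…,n_m)-homogeneous polynomial P : X₁ × ⋯ × X_m → 𝕂 is absolutely (1;1)-summing; that is, ∑_j |P(x_j^{(1)},…,x_j^{(m)})| < ∞ whenever (x_j^{(k)})_j ∈ ℓ₁^w(X_k) for each k = 1,…,m. -/
open scoped BigOperators

/-- A sequence in a normed space is *weakly 1-summable*. -/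
def WeaklySummable (𝕂 : Type*) [RCLike 𝕂] {X : Type*} [NormedAddCommGroup X]
    [NormedSpace 𝕂 X] (x : ℕ → X) : Prop :=
  ∀ φ : X →L[𝕂] 𝕂, Summable fun j => ‖φ (x j)‖

/-- `P` is a continuous `(n 0, …, n (m-1))`-homogeneous polynomial, i.e. it comes from a
continuous multilinear map in `n 0 + ⋯ + n (m-1)` variables (`n k` copies of `X k`). -/
def IsMultiPoly (𝕂 : Type*) [RCLike 𝕂] {m : ℕ} (n : Fin m → ℕ)
    {X : Fin m → Type*} [∀ k, NormedAddCommGroup (X k)] [∀ k, NormedSpace 𝕂 (X k)]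
    {Y : Type*} [NormedAddCommGroup Y] [NormedSpace 𝕂 Y]
    (P : (∀ k, X k) → Y) : Prop :=
  ∃ T : ContinuousMultilinearMap 𝕂 (fun i : Σ k : Fin m, Fin (n k) => X i.1) Y,
    ∀ x : ∀ k, X k, P x = T fun i => x i.1

/-! ### Auxiliary material for the proof -/

/-- The "sign character" attached to a finite set: `+1` on the set, `-1` off it. -/
noncomputable def dvChi (𝕂 : Type*) [RCLike 𝕂] (S : Finset ℕ) (j : ℕ) : 𝕂 :=
  if j ∈ S then 1 else -1

lemma dvChi_norm (𝕂 : Type*) [RCLike 𝕂] (S : Finset ℕ) (j : ℕ) : ‖dvChi 𝕂 S j‖ = 1 := by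
  unfold dvChi; split <;> simp

/-- Orthogonality of the sign characters when averaged over all subsets. -/
lemma dvChi_orth (𝕂 : Type*) [RCLike 𝕂] (U : Finset ℕ) {a : ℕ} (b : ℕ) (ha : a ∈ U) :
    ∑ S ∈ U.powerset, dvChi 𝕂 S a * dvChi 𝕂 S b
      = if a = b then (2:𝕂) ^ U.card else 0 := by
  by_cases hab : a = b
  · subst hab
    rw [if_pos rfl]
    have h1 : ∀ S ∈ U.powerset, dvChi 𝕂 S a * dvChi 𝕂 S a = 1 := by
      intro S _; unfold dvChi; split <;> ring
    rw [Finset.sum_congr rfl h1, Finset.sum_const, Finset.card_powerset]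
    simp
  · rw [if_neg hab]
    have hU : U = insert a (U.erase a) := (Finset.insert_erase ha).symm
    rw [hU, Finset.sum_powerset_insert (Finset.notMem_erase a U)]
    have h2 : ∀ t ∈ (U.erase a).powerset,
        dvChi 𝕂 (insert a t) a * dvChi 𝕂 (insert a t) b
          = - (dvChi 𝕂 t a * dvChi 𝕂 t b) := by
      intro t ht
      have hat : a ∉ t := fun h => Finset.notMem_erase a U (Finset.mem_powerset.1 ht h)
      unfold dvChi
      rw [if_pos (Finset.mem_insert_self a t), if_neg hat]
      by_cases hbt : b ∈ t
      · rw [if_pos (Finset.mem_insert_of_mem hbt), if_pos hbt]; ring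
      · rw [if_neg (by simp only [Finset.mem_insert, hbt, or_false]; exact fun h => hab h.symm),
          if_neg hbt]; ring
    rw [Finset.sum_congr rfl h2]
    simp

/-- The key quantitative inequality (the Defant–Voigt inequality, obtained through
averaging over random signs): for a scalar-valued continuous multilinear map and sequences
whose "unimodular combinations" are uniformly bounded by `C i`, the partial sums of
`‖T (y · j)‖` are bounded by `‖T‖ * ∏ C i`. -/
theorem dv_key (𝕂 : Type*) [RCLike 𝕂] {ι : Type*} [Fintype ι] [DecidableEq ι] (i0 : ι)
    {X : ι → Type*} [∀ i, NormedAddCommGroup (X i)] [∀ i, NormedSpace 𝕂 (X i)]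
    (T : ContinuousMultilinearMap 𝕂 X 𝕂) (y : ∀ i, ℕ → X i) (C : ι → ℝ)
    (hC : ∀ i (s : Finset ℕ) (c : ℕ → 𝕂), (∀ j, ‖c j‖ ≤ 1) →
      ‖∑ j ∈ s, c j • y i j‖ ≤ C i) (J : ℕ) :
    ∑ j ∈ Finset.range J, ‖T (fun i => y i j)‖ ≤ ‖T‖ * ∏ i, C i := by
  classical
  set U : Finset ℕ := Finset.range J with hUdef
  set Tv : ℕ → 𝕂 := fun j => T (fun i => y i j) with hTv
  set lam : ℕ → 𝕂 := fun j => if Tv j = 0 then 0 else (‖Tv j‖ : 𝕂) / Tv j with hlam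
  have hlam_norm : ∀ j, ‖lam j‖ ≤ 1 := by
    intro j
    simp only [hlam]
    split
    · simp
    · rename_i h
      rw [norm_div, RCLike.norm_ofReal, abs_norm]
      exact div_self_le_one _
  have hlam_mul : ∀ j, lam j * Tv j = (‖Tv j‖ : 𝕂) := by
    intro j
    simp only [hlam]
    split
    · rename_i h; simp [h]
    · rename_i h; field_simp
  -- coefficients
  set ι' := {i : ι // i ≠ i0} with hι'
  set coef : (ι' → Finset ℕ) → ∀ i : ι, ℕ → 𝕂 :=
    fun S i j => if h : i = i0 then lam j * ∏ i' : ι', dvChi 𝕂 (S i') j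
                 else dvChi 𝕂 (S ⟨i, h⟩) j with hcoefdef
  have hcoef_norm : ∀ S i j, ‖coef S i j‖ ≤ 1 := by
    intro S i j
    simp only [hcoefdef]
    split
    · rw [norm_mul, norm_prod]
      calc ‖lam j‖ * ∏ i' : ι', ‖dvChi 𝕂 (S i') j‖
          = ‖lam j‖ * 1 := by rw [Finset.prod_congr rfl fun i' _ => dvChi_norm 𝕂 (S i') j]; simp
        _ ≤ 1 := by rw [mul_one]; exact hlam_norm j
    · rw [dvChi_norm]
  set 𝒮 : Finset (ι' → Finset ℕ) := Fintype.piFinset (fun _ : ι' => U.powerset) with h𝒮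
  set R : Finset (ι → ℕ) := Fintype.piFinset (fun _ : ι => U) with hR
  set z : (ι' → Finset ℕ) → ∀ i, X i := fun S i => ∑ j ∈ U, coef S i j • y i j with hz
  set c' : ℕ := Fintype.card ι' with hc'
  -- Step A : per-S bound
  have stepA : ∀ S, ‖T (z S)‖ ≤ ‖T‖ * ∏ i, C i := by
    intro S
    refine (T.le_opNorm (z S)).trans ?_
    refine mul_le_mul_of_nonneg_left ?_ (norm_nonneg T)
    exact Finset.prod_le_prod (fun i _ => norm_nonneg _)
      (fun i _ => hC i U (coef S i) (hcoef_norm S i))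
  -- Step B : identity
  have expand : ∀ S, T (z S) = ∑ r ∈ R, (∏ i, coef S i (r i)) * T (fun i => y i (r i)) := by
    intro S
    have := T.toMultilinearMap.map_sum_finset (fun i j => coef S i j • y i j) (fun _ => U)
    simp only [ContinuousMultilinearMap.coe_coe] at this
    rw [hz]
    simp only []
    rw [this]
    refine Finset.sum_congr rfl fun r _ => ?_
    have := T.toMultilinearMap.map_smul_univ (fun i => coef S i (r i)) (fun i => y i (r i))
    simp only [ContinuousMultilinearMap.coe_coe] at this
    rw [this, smul_eq_mul]
  have prod_coef : ∀ (S : ι' → Finset ℕ) (r : ι → ℕ),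
      ∏ i, coef S i (r i)
        = lam (r i0) * ∏ i' : ι', (dvChi 𝕂 (S i') (r i'.1) * dvChi 𝕂 (S i') (r i0)) := by
    intro S r
    rw [← Finset.mul_prod_erase Finset.univ _ (Finset.mem_univ i0)]
    have h1 : coef S i0 (r i0) = lam (r i0) * ∏ i' : ι', dvChi 𝕂 (S i') (r i0) := by
      simp only [hcoefdef, dif_pos rfl]
    have h2 : ∏ i ∈ Finset.univ.erase i0, coef S i (r i)
        = ∏ i' : ι', dvChi 𝕂 (S i') (r i'.1) := by
      rw [Finset.prod_subtype (p := fun i => i ≠ i0) (Finset.univ.erase i0)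
        (fun i => by simp [Finset.mem_erase]) (fun i => coef S i (r i))]
      refine Finset.prod_congr rfl fun i' _ => ?_
      simp only [hcoefdef, dif_neg i'.2]
    rw [h1, h2, mul_assoc, ← Finset.prod_mul_distrib]
    congr 1
    exact Finset.prod_congr rfl fun i' _ => mul_comm _ _
  have inner : ∀ r ∈ R, ∑ S ∈ 𝒮, ∏ i, coef S i (r i)
      = if (∀ i' : ι', r i'.1 = r i0) then lam (r i0) * ((2:𝕂) ^ J) ^ c' else 0 := by
    intro r hr
    have hrU : ∀ i, r i ∈ U := fun i => Fintype.mem_piFinset.1 hr i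
    calc ∑ S ∈ 𝒮, ∏ i, coef S i (r i)
        = ∑ S ∈ 𝒮, lam (r i0) * ∏ i' : ι', (dvChi 𝕂 (S i') (r i'.1) * dvChi 𝕂 (S i') (r i0)) :=
          Finset.sum_congr rfl fun S _ => prod_coef S r
      _ = lam (r i0) * ∑ S ∈ 𝒮, ∏ i' : ι', (dvChi 𝕂 (S i') (r i'.1) * dvChi 𝕂 (S i') (r i0)) := by
          rw [Finset.mul_sum]
      _ = lam (r i0) * ∏ i' : ι', ∑ S' ∈ U.powerset, dvChi 𝕂 S' (r i'.1) * dvChi 𝕂 S' (r i0) := by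
          rw [Finset.prod_univ_sum]
      _ = lam (r i0) * ∏ i' : ι', (if r i'.1 = r i0 then (2:𝕂) ^ U.card else 0) := by
          congr 1
          exact Finset.prod_congr rfl fun i' _ => dvChi_orth 𝕂 U (r i0) (hrU i'.1)
      _ = if (∀ i' : ι', r i'.1 = r i0) then lam (r i0) * ((2:𝕂) ^ J) ^ c' else 0 := by
          by_cases h : ∀ i' : ι', r i'.1 = r i0
          · rw [if_pos h]
            congr 1
            calc ∏ i' : ι', (if r i'.1 = r i0 then (2:𝕂) ^ U.card else 0)
                = ∏ _i' : ι', (2:𝕂) ^ U.card :=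
                  Finset.prod_congr rfl fun i' _ => if_pos (h i')
              _ = ((2:𝕂) ^ J) ^ c' := by
                  rw [Finset.prod_const, hUdef, Finset.card_range, Finset.card_univ]
          · rw [if_neg h]
            push_neg at h
            obtain ⟨i', hi'⟩ := h
            have hz0 : (if r i'.1 = r i0 then (2:𝕂) ^ U.card else 0) = 0 := if_neg hi'
            rw [Finset.prod_eq_zero (Finset.mem_univ i') hz0, mul_zero]
  have stepB : ∑ S ∈ 𝒮, T (z S) = ((2:𝕂) ^ J) ^ c' * ∑ j ∈ U, (‖Tv j‖ : 𝕂) := by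
    calc ∑ S ∈ 𝒮, T (z S)
        = ∑ S ∈ 𝒮, ∑ r ∈ R, (∏ i, coef S i (r i)) * T (fun i => y i (r i)) :=
          Finset.sum_congr rfl fun S _ => expand S
      _ = ∑ r ∈ R, (∑ S ∈ 𝒮, ∏ i, coef S i (r i)) * T (fun i => y i (r i)) := by
          rw [Finset.sum_comm]
          exact Finset.sum_congr rfl fun r _ => (Finset.sum_mul _ _ _).symm
      _ = ∑ r ∈ R, (if (∀ i' : ι', r i'.1 = r i0) then lam (r i0) * ((2:𝕂) ^ J) ^ c' else 0)
            * T (fun i => y i (r i)) :=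
          Finset.sum_congr rfl fun r hr => by rw [inner r hr]
      _ = ∑ r ∈ R.filter (fun r => ∀ i' : ι', r i'.1 = r i0),
            (lam (r i0) * ((2:𝕂) ^ J) ^ c') * T (fun i => y i (r i)) := by
          rw [Finset.sum_filter]
          exact Finset.sum_congr rfl fun r _ => by rw [ite_mul, zero_mul]
      _ = ∑ j ∈ U, (lam j * ((2:𝕂) ^ J) ^ c') * Tv j := by
          refine Finset.sum_nbij' (fun r => r i0) (fun j => fun _ => j) ?_ ?_ ?_ ?_ ?_
          · intro r hr
            exact Fintype.mem_piFinset.1 (Finset.mem_filter.1 hr).1 i0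
          · intro j hj
            refine Finset.mem_filter.2 ⟨Fintype.mem_piFinset.2 fun _ => hj, fun _ => rfl⟩
          · intro r hr
            obtain ⟨hr1, hr2⟩ := Finset.mem_filter.1 hr
            funext i
            by_cases h : i = i0
            · rw [h]
            · exact (hr2 ⟨i, h⟩).symm
          · intro j hj; rfl
          · intro r hr
            obtain ⟨hr1, hr2⟩ := Finset.mem_filter.1 hr
            have hry : (fun i => y i (r i)) = fun i => y i (r i0) := by
              funext i
              by_cases h : i = i0
              · rw [h]
              · rw [hr2 ⟨i, h⟩]
            rw [hry]
      _ = ((2:𝕂) ^ J) ^ c' * ∑ j ∈ U, (‖Tv j‖ : 𝕂) := by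
          rw [Finset.mul_sum]
          refine Finset.sum_congr rfl fun j _ => ?_
          rw [mul_comm (lam j) _, mul_assoc, hlam_mul j]
  -- Step C : conclude
  have hKpos : (0:ℝ) < (2 ^ J) ^ c' := by positivity
  have hnorm1 : ‖∑ S ∈ 𝒮, T (z S)‖ ≤ ((2:ℝ) ^ J) ^ c' * (‖T‖ * ∏ i, C i) := by
    refine (norm_sum_le _ _).trans ?_
    refine (Finset.sum_le_card_nsmul 𝒮 _ (‖T‖ * ∏ i, C i) fun S _ => stepA S).trans ?_
    rw [nsmul_eq_mul]
    refine mul_le_mul_of_nonneg_right ?_ ?_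
    · rw [h𝒮, Fintype.card_piFinset]
      simp only [Finset.card_powerset, hUdef, Finset.card_range, Finset.prod_const,
        Finset.card_univ]
      push_cast
      rw [hc']
    · calc (0:ℝ) ≤ ‖T (z (fun _ => ∅))‖ := norm_nonneg _
        _ ≤ _ := stepA _
  have hnorm2 : ‖∑ S ∈ 𝒮, T (z S)‖ = ((2:ℝ) ^ J) ^ c' * ∑ j ∈ U, ‖Tv j‖ := by
    rw [stepB, norm_mul]
    congr 1
    · rw [norm_pow, norm_pow, RCLike.norm_ofNat]
    · have : ∑ j ∈ U, (‖Tv j‖ : 𝕂) = ((∑ j ∈ U, ‖Tv j‖ : ℝ) : 𝕂) := by push_cast; ring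
      rw [this, RCLike.norm_ofReal, abs_of_nonneg (Finset.sum_nonneg fun j _ => norm_nonneg _)]
  rw [hnorm2] at hnorm1
  exact le_of_mul_le_mul_left hnorm1 hKpos

/-- Weak 1-summability gives a uniform bound on all finite unimodular combinations
(by Banach–Steinhaus applied in the double dual). -/
lemma dv_bound (𝕂 : Type*) [RCLike 𝕂] {X : Type*} [NormedAddCommGroup X]
    [NormedSpace 𝕂 X] [CompleteSpace X] (x : ℕ → X) (hx : WeaklySummable 𝕂 x) :
    ∃ C : ℝ, ∀ (s : Finset ℕ) (c : ℕ → 𝕂), (∀ j, ‖c j‖ ≤ 1) →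
      ‖∑ j ∈ s, c j • x j‖ ≤ C := by
  classical
  set g : Finset ℕ × {c : ℕ → 𝕂 // ∀ j, ‖c j‖ ≤ 1} →
      (StrongDual 𝕂 X) →L[𝕂] 𝕂 :=
    fun p => ∑ j ∈ p.1, p.2.1 j • (NormedSpace.inclusionInDoubleDual 𝕂 X (x j)) with hg
  have hgapp : ∀ p φ, g p φ = ∑ j ∈ p.1, p.2.1 j • φ (x j) := by
    intro p φ
    rw [hg]
    simp only [ContinuousLinearMap.coe_sum', Finset.sum_apply,
      ContinuousLinearMap.coe_smul', Pi.smul_apply, NormedSpace.dual_def]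
  have hpt : ∀ φ : StrongDual 𝕂 X, ∃ Cφ, ∀ p, ‖g p φ‖ ≤ Cφ := by
    intro φ
    refine ⟨∑' j, ‖φ (x j)‖, fun p => ?_⟩
    rw [hgapp]
    refine (norm_sum_le _ _).trans ?_
    refine le_trans ?_ (Summable.sum_le_tsum p.1 (fun j _ => norm_nonneg _) (hx φ))
    refine Finset.sum_le_sum fun j _ => ?_
    rw [norm_smul]
    exact mul_le_of_le_one_left (norm_nonneg _) (p.2.2 j)
  obtain ⟨C', hC'⟩ := banach_steinhaus hpt
  refine ⟨max C' 0, fun s c hc => ?_⟩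
  refine NormedSpace.norm_le_dual_bound 𝕂 _ (le_max_right _ _) fun φ => ?_
  have h1 : φ (∑ j ∈ s, c j • x j) = g (s, ⟨c, hc⟩) φ := by
    rw [hgapp, map_sum]
    exact Finset.sum_congr rfl fun j _ => map_smul φ (c j) (x j)
  rw [h1]
  calc ‖g (s, ⟨c, hc⟩) φ‖ ≤ ‖g (s, ⟨c, hc⟩)‖ * ‖φ‖ := ContinuousLinearMap.le_opNorm _ _
    _ ≤ max C' 0 * ‖φ‖ :=
      mul_le_mul_of_nonneg_right ((hC' _).trans (le_max_left _ _)) (norm_nonneg _)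

/-- Every continuous scalar-valued `(n₁,…,n_m)`-homogeneous polynomial is
absolutely `(1;1)`-summing. -/
theorem stmt0 (𝕂 : Type*) [RCLike 𝕂] (m : ℕ) (hm : 0 < m) (n : Fin m → ℕ)
    (hn : ∀ k, 0 < n k) (X : Fin m → Type*) [∀ k, NormedAddCommGroup (X k)]
    [∀ k, NormedSpace 𝕂 (X k)] [∀ k, CompleteSpace (X k)]
    (P : (∀ k, X k) → 𝕂) (hP : IsMultiPoly 𝕂 n P)
    (x : ∀ k, ℕ → X k) (hx : ∀ k, WeaklySummable 𝕂 (x k)) :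
    Summable fun j => ‖P fun k => x k j‖ := by
  classical
  obtain ⟨T, hT⟩ := hP
  have hb : ∀ i : Σ k : Fin m, Fin (n k), ∃ C : ℝ,
      ∀ (s : Finset ℕ) (c : ℕ → 𝕂), (∀ j, ‖c j‖ ≤ 1) →
        ‖∑ j ∈ s, c j • x i.1 j‖ ≤ C :=
    fun i => dv_bound 𝕂 (x i.1) (hx i.1)
  choose C hC using hb
  have i0 : Σ k : Fin m, Fin (n k) := ⟨⟨0, hm⟩, ⟨0, hn ⟨0, hm⟩⟩⟩
  have key : ∀ J, ∑ j ∈ Finset.range J, ‖T (fun i => x i.1 j)‖ ≤ ‖T‖ * ∏ i, C i :=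
    fun J => dv_key 𝕂 i0 T (fun i => x i.1) C hC J
  have hfun : (fun j => ‖P fun k => x k j‖) = fun j => ‖T fun i => x i.1 j‖ := by
    funext j
    rw [hT]
  rw [hfun]
  exact summable_of_sum_range_le (fun j => norm_nonneg _) key
end

section
/- Let m ∈ ℕ, (n₁,…,n_m) ∈ ℕ^m (each n_k ≥ 1), and let X₁,…,X_m be Banach spaces such that X_j has cotype q_j with 2 ≤ q_j < ∞ for each j = 1,…,m. Then for every Banach space Y and every s > 0 with 1/s ≤ n₁/q₁ + ⋯ + n_m/q_m, every continuous (n₁,…,n_m)-homogeneous polynomial P : X₁ × ⋯ × X_m → Y is absolutely (s;1)-summing. -/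
open scoped BigOperators

/-- A normed space has cotype `q` (Rademacher averages written as an average over signs). -/
def HasCotype (X : Type*) [NormedAddCommGroup X] (q : ℝ) : Prop :=
  ∃ C : ℝ, 0 ≤ C ∧ ∀ (k : ℕ) (x : Fin k → X),
    (∑ j, ‖x j‖ ^ q) ^ (1 / q) ≤
      C * Real.sqrt ((2 ^ k : ℝ)⁻¹ *
        ∑ ε : Fin k → Bool, ‖∑ j, (if ε j then x j else -x j)‖ ^ 2)

/-! By the uniform boundedness principle the signed partial sums `∑_{j<N} ±x_j` of a weakly
1-summable sequence are bounded, so cotype `q` puts `(‖x_j‖)_j` in `ℓ_q`. Since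
`‖P(x^{(1)},…,x^{(m)})‖^s ≤ ‖T‖^s ∏_k (‖x^{(k)}‖^{q_k})^{θ_k}` with `θ_k = s n_k / q_k` and
`S = ∑_k θ_k ≥ 1`, it remains to see that `∏_k b_k^{θ_k}` is summable for nonnegative summable
`b_k`: weighted AM-GM bounds it by `(∑_k θ_k b_k / S)^S`, and the `S`-th power of a nonnegative
summable sequence is summable because the sequence is eventually below `1`. -/

open Finset

section Holder

variable {α : Type*}

theorem Summable.rpow_of_one_le {f : α → ℝ} (hf0 : ∀ j, 0 ≤ f j) (hf : Summable f) {p : ℝ}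
    (hp : 1 ≤ p) : Summable fun j => f j ^ p := by
  refine hf.of_norm_bounded_eventually ?_
  filter_upwards [hf.tendsto_cofinite_zero.eventually_le_const zero_lt_one] with j hj
  rw [Real.norm_of_nonneg (Real.rpow_nonneg (hf0 j) p)]
  exact Real.rpow_le_self_of_le_one (hf0 j) hj hp

theorem summable_prod_rpow_of_one_le_sum {ι : Type*} [Fintype ι] {b : ι → α → ℝ}
    (hb0 : ∀ k j, 0 ≤ b k j) (hb : ∀ k, Summable (b k)) {θ : ι → ℝ} (hθ0 : ∀ k, 0 ≤ θ k)
    (hθ : 1 ≤ ∑ k, θ k) : Summable fun j => ∏ k, b k j ^ θ k := by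
  set S := ∑ k, θ k
  have hS : 0 < S := zero_lt_one.trans_le hθ
  have hprod0 : ∀ j, 0 ≤ ∏ k, b k j ^ θ k := fun j =>
    prod_nonneg fun k _ => Real.rpow_nonneg (hb0 k j) _
  have hmean : ∀ j, ∏ k, b k j ^ θ k ≤ ((∑ k, θ k * b k j) / S) ^ S := fun j =>
    calc ∏ k, b k j ^ θ k = ((∏ k, b k j ^ θ k) ^ S⁻¹) ^ S := by
          rw [← Real.rpow_mul (hprod0 j), inv_mul_cancel₀ hS.ne', Real.rpow_one]
      _ ≤ ((∑ k, θ k * b k j) / S) ^ S :=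
          Real.rpow_le_rpow (Real.rpow_nonneg (hprod0 j) _)
            (Real.geom_mean_le_arith_mean univ θ (b · j) (fun k _ => hθ0 k) hS
              fun k _ => hb0 k j) hS.le
  have hmean_summable : Summable fun j => (∑ k, θ k * b k j) / S :=
    (summable_sum fun k _ => (hb k).mul_left (θ k)).div_const S
  refine .of_nonneg_of_le hprod0 hmean (hmean_summable.rpow_of_one_le (fun j => ?_) hθ)
  exact div_nonneg (sum_nonneg fun k _ => mul_nonneg (hθ0 k) (hb0 k j)) hS.le

theorem summable_prod_rpow_of_summable_rpow {ι : Type*} [Fintype ι] {a : ι → α → ℝ}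
    (ha0 : ∀ k j, 0 ≤ a k j) {p r : ι → ℝ} (hp : ∀ k, 0 < p k) (hr : ∀ k, 0 ≤ r k)
    (ha : ∀ k, Summable fun j => a k j ^ p k) (hpr : 1 ≤ ∑ k, r k / p k) :
    Summable fun j => ∏ k, a k j ^ r k := by
  convert summable_prod_rpow_of_one_le_sum (fun k j => Real.rpow_nonneg (ha0 k j) (p k)) ha
    (fun k => div_nonneg (hr k) (hp k).le) hpr using 3 with j k
  rw [← Real.rpow_mul (ha0 k j), mul_div_cancel₀ _ (hp k).ne']

end Holder

section Cotype

variable {𝕂 : Type*} [RCLike 𝕂] {X : Type*} [NormedAddCommGroup X] [NormedSpace 𝕂 X]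

theorem WeaklySummable.exists_bound_norm_sum_signs {x : ℕ → X} (hx : WeaklySummable 𝕂 x) :
    ∃ W, ∀ (N : ℕ) (ε : Fin N → Bool), ‖∑ j : Fin N, (if ε j then x j else -x j)‖ ≤ W := by
  let y : (Σ N : ℕ, (Fin N → Bool)) → X := fun i =>
    ∑ j : Fin i.1, (if i.2 j then x j else -x j)
  -- Banach–Steinhaus runs on the dual of `X`, which is complete even when `X` is not.
  have hpointwise : ∀ φ : StrongDual 𝕂 X,
      ∃ c, ∀ i, ‖NormedSpace.inclusionInDoubleDual 𝕂 X (y i) φ‖ ≤ c := fun φ =>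
    ⟨∑' j, ‖φ (x j)‖, fun ⟨N, ε⟩ =>
      calc ‖φ (y ⟨N, ε⟩)‖ ≤ ∑ j : Fin N, ‖φ (x j)‖ := by
            simp only [y, map_sum]
            refine (norm_sum_le _ _).trans_eq (sum_congr rfl fun j _ => ?_)
            split <;> simp
        _ ≤ ∑' j, ‖φ (x j)‖ := by
            rw [Fin.sum_univ_eq_sum_range (fun j => ‖φ (x j)‖)]
            exact (hx φ).sum_le_tsum _ fun _ _ => norm_nonneg _⟩
  obtain ⟨W, hW⟩ := banach_steinhaus hpointwise
  refine ⟨W, fun N ε => ?_⟩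
  rw [← (NormedSpace.inclusionInDoubleDualLi 𝕂).norm_map]
  exact hW ⟨N, ε⟩

theorem HasCotype.exists_forall_sum_rpow_le {q : ℝ} (hcot : HasCotype X q) (hq : 0 < q) :
    ∃ C, ∀ (N : ℕ) (x : Fin N → X) (W : ℝ),
      (∀ ε : Fin N → Bool, ‖∑ j, (if ε j then x j else -x j)‖ ≤ W) →
        ∑ j, ‖x j‖ ^ q ≤ (C * W) ^ q := by
  obtain ⟨C, hC0, hC⟩ := hcot
  refine ⟨C, fun N x W hW => ?_⟩
  have hW0 : 0 ≤ W := (norm_nonneg _).trans (hW fun _ => true)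
  have haverage : (2 ^ N : ℝ)⁻¹ * ∑ ε : Fin N → Bool,
      ‖∑ j, (if ε j then x j else -x j)‖ ^ 2 ≤ W ^ 2 := by
    rw [inv_mul_le_iff₀ (by positivity)]
    calc ∑ ε : Fin N → Bool, ‖∑ j, (if ε j then x j else -x j)‖ ^ 2
        ≤ ∑ _ε : Fin N → Bool, W ^ 2 := sum_le_sum fun ε _ => by gcongr; exact hW ε
      _ = 2 ^ N * W ^ 2 := by simp
  have hroot : (∑ j, ‖x j‖ ^ q) ^ (1 / q) ≤ C * W := by
    refine (hC N x).trans (mul_le_mul_of_nonneg_left ?_ hC0)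
    simpa only [Real.sqrt_sq hW0] using Real.sqrt_le_sqrt haverage
  have hsum0 : 0 ≤ ∑ j, ‖x j‖ ^ q := sum_nonneg fun j _ => by positivity
  calc ∑ j, ‖x j‖ ^ q = ((∑ j, ‖x j‖ ^ q) ^ (1 / q)) ^ q := by
        rw [← Real.rpow_mul hsum0, one_div_mul_cancel hq.ne', Real.rpow_one]
    _ ≤ (C * W) ^ q := by gcongr

theorem HasCotype.summable_norm_rpow {q : ℝ} (hcot : HasCotype X q) (hq : 0 < q) {x : ℕ → X}
    (hx : WeaklySummable 𝕂 x) : Summable fun j => ‖x j‖ ^ q := by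
  obtain ⟨C, hC⟩ := hcot.exists_forall_sum_rpow_le hq
  obtain ⟨W, hW⟩ := hx.exists_bound_norm_sum_signs
  refine summable_of_sum_range_le (c := (C * W) ^ q) (fun j => by positivity) fun N => ?_
  rw [← Fin.sum_univ_eq_sum_range (fun j => ‖x j‖ ^ q)]
  exact hC N (fun j => x j) W (hW N)

end Cotype

theorem IsMultiPoly.exists_norm_rpow_le {𝕂 : Type*} [RCLike 𝕂] {m : ℕ} {n : Fin m → ℕ}
    {X : Fin m → Type*} [∀ k, NormedAddCommGroup (X k)] [∀ k, NormedSpace 𝕂 (X k)]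
    {Y : Type*} [NormedAddCommGroup Y] [NormedSpace 𝕂 Y] {P : (∀ k, X k) → Y}
    (hP : IsMultiPoly 𝕂 n P) {s : ℝ} (hs : 0 ≤ s) :
    ∃ C, ∀ x : ∀ k, X k, ‖P x‖ ^ s ≤ C * ∏ k, ‖x k‖ ^ (n k * s) := by
  obtain ⟨T, hT⟩ := hP
  refine ⟨‖T‖ ^ s, fun x => ?_⟩
  have hbound : ‖P x‖ ≤ ‖T‖ * ∏ k, ‖x k‖ ^ n k := by
    have hprod : ∏ i : Σ k, Fin (n k), ‖x i.1‖ = ∏ k, ‖x k‖ ^ n k :=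
      (Fintype.prod_sigma' fun k (_ : Fin (n k)) => ‖x k‖).trans (by simp)
    rw [hT, ← hprod]
    exact T.le_opNorm _
  calc ‖P x‖ ^ s ≤ (‖T‖ * ∏ k, ‖x k‖ ^ n k) ^ s := by gcongr
    _ = ‖T‖ ^ s * ∏ k, ‖x k‖ ^ (n k * s) := by
        rw [Real.mul_rpow (norm_nonneg _) (by positivity),
          ← Real.finsetProd_rpow _ _ fun k _ => by positivity]
        simp only [Real.rpow_mul (norm_nonneg _), Real.rpow_natCast]

theorem stmt3_general (𝕂 : Type*) [RCLike 𝕂] (m : ℕ) (n : Fin m → ℕ)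
    (X : Fin m → Type*) [∀ k, NormedAddCommGroup (X k)]
    [∀ k, NormedSpace 𝕂 (X k)]
    (q : Fin m → ℝ) (hq2 : ∀ k, 2 ≤ q k) (hcot : ∀ k, HasCotype (X k) (q k))
    (Y : Type*) [NormedAddCommGroup Y] [NormedSpace 𝕂 Y]
    (s : ℝ) (hs : 0 < s) (hs1 : 1 / s ≤ ∑ k, (n k : ℝ) / q k)
    (P : (∀ k, X k) → Y) (hP : IsMultiPoly 𝕂 n P)
    (x : ∀ k, ℕ → X k) (hx : ∀ k, WeaklySummable 𝕂 (x k)) :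
    Summable fun j => ‖P fun k => x k j‖ ^ s := by
  have hq : ∀ k, 0 < q k := fun k => by linarith [hq2 k]
  have hexponents : 1 ≤ ∑ k, (n k : ℝ) * s / q k :=
    calc 1 = s * (1 / s) := by field_simp
      _ ≤ s * ∑ k, (n k : ℝ) / q k := by gcongr
      _ = ∑ k, (n k : ℝ) * s / q k := by rw [mul_sum]; congr! 1 with k; ring
  have hprod : Summable fun j => ∏ k, ‖x k j‖ ^ (n k * s) :=
    summable_prod_rpow_of_summable_rpow (fun k j => norm_nonneg _) hq (fun k => by positivity)
      (fun k => (hcot k).summable_norm_rpow (hq k) (hx k)) hexponents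
  obtain ⟨C, hC⟩ := hP.exists_norm_rpow_le hs.le
  exact .of_nonneg_of_le (fun j => by positivity) (fun j => hC _) (hprod.mul_left C)

/-- If each `X_j` has cotype `q_j`, then every continuous `(n₁,…,n_m)`-homogeneous polynomial
into any Banach space `Y` is absolutely `(s;1)`-summing whenever `1/s ≤ ∑ n_k/q_k`. -/
theorem stmt3 (𝕂 : Type*) [RCLike 𝕂] (m : ℕ) (hm : 0 < m) (n : Fin m → ℕ)
    (hn : ∀ k, 1 ≤ n k) (X : Fin m → Type*) [∀ k, NormedAddCommGroup (X k)]
    [∀ k, NormedSpace 𝕂 (X k)] [∀ k, CompleteSpace (X k)]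
    (q : Fin m → ℝ) (hq2 : ∀ k, 2 ≤ q k) (hcot : ∀ k, HasCotype (X k) (q k))
    (Y : Type*) [NormedAddCommGroup Y] [NormedSpace 𝕂 Y] [CompleteSpace Y]
    (s : ℝ) (hs : 0 < s) (hs1 : 1 / s ≤ ∑ k, (n k : ℝ) / q k)
    (P : (∀ k, X k) → Y) (hP : IsMultiPoly 𝕂 n P)
    (x : ∀ k, ℕ → X k) (hx : ∀ k, WeaklySummable 𝕂 (x k)) :
    Summable fun j => ‖P fun k => x k j‖ ^ s :=
  stmt3_general 𝕂 m n X q hq2 hcot Y s hs hs1 P hP x hx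
end

section
/- Let m ∈ ℕ, (n₁,…,n_m) ∈ ℕ^m (each n_k ≥ 1), and let Y be a Banach space having cotype q with 2 ≤ q < ∞. Then for all Banach spaces X₁,…,X_m, every continuous (n₁,…,n_m)-homogeneous polynomial P : X₁ × ⋯ × X_m → Y is absolutely (q;1)-summing. -/
open scoped BigOperators

lemma weakly_uniform_bound (𝕂 : Type*) [RCLike 𝕂] {X : Type*} [NormedAddCommGroup X]
    [NormedSpace 𝕂 X] (x : ℕ → X) (hx : WeaklySummable 𝕂 x) :
    ∃ K : ℝ, 0 ≤ K ∧ ∀ (N : ℕ) (a : Fin N → 𝕂), (∀ j, ‖a j‖ ≤ 1) →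
      ‖∑ j : Fin N, a j • x (j : ℕ)‖ ≤ K := by
  have hnorm : ∀ v : X, ‖NormedSpace.inclusionInDoubleDual 𝕂 X v‖ = ‖v‖ := fun v =>
    (NormedSpace.inclusionInDoubleDualLi 𝕂 (E := X)).norm_map v
  obtain ⟨C', hC'⟩ := banach_steinhaus
    (g := fun p : (N : ℕ) × {a : Fin N → 𝕂 // ∀ j, ‖a j‖ ≤ 1} =>
      NormedSpace.inclusionInDoubleDual 𝕂 X (∑ j : Fin p.1, (p.2 : Fin p.1 → 𝕂) j • x (j : ℕ)))
    (by
      intro φ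
      refine ⟨∑' j, ‖φ (x j)‖, ?_⟩
      rintro ⟨N, a, ha⟩
      simp only [NormedSpace.dual_def]
      calc ‖φ (∑ j : Fin N, a j • x (j : ℕ))‖
          = ‖∑ j : Fin N, a j • φ (x (j : ℕ))‖ := by rw [map_sum]; simp_rw [map_smul]
        _ ≤ ∑ j : Fin N, ‖a j • φ (x (j : ℕ))‖ := norm_sum_le _ _
        _ ≤ ∑ j : Fin N, ‖φ (x (j : ℕ))‖ := Finset.sum_le_sum fun j _ => by
              rw [norm_smul]
              exact mul_le_of_le_one_left (norm_nonneg _) (ha j)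
        _ = ∑ j ∈ Finset.range N, ‖φ (x j)‖ := Fin.sum_univ_eq_sum_range (fun j => ‖φ (x j)‖) N
        _ ≤ ∑' j, ‖φ (x j)‖ := sum_le_hasSum _ (fun _ _ => norm_nonneg _) (hx φ).hasSum)
  refine ⟨max C' 0, le_max_right _ _, ?_⟩
  intro N a ha
  have h1 := hC' ⟨N, a, ha⟩
  rw [hnorm] at h1
  exact le_trans h1 (le_max_left _ _)

/-- If `Y` has cotype `q`, then every continuous `(n₁,…,n_m)`-homogeneous polynomial into `Y`
is absolutely `(q;1)`-summing. -/
theorem stmt4 (𝕂 : Type*) [RCLike 𝕂] (m : ℕ) (hm : 0 < m) (n : Fin m → ℕ)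
    (hn : ∀ k, 1 ≤ n k) (X : Fin m → Type*) [∀ k, NormedAddCommGroup (X k)]
    [∀ k, NormedSpace 𝕂 (X k)] [∀ k, CompleteSpace (X k)]
    (Y : Type*) [NormedAddCommGroup Y] [NormedSpace 𝕂 Y] [CompleteSpace Y]
    (q : ℝ) (hq2 : 2 ≤ q) (hcot : HasCotype Y q)
    (P : (∀ k, X k) → Y) (hP : IsMultiPoly 𝕂 n P)
    (x : ∀ k, ℕ → X k) (hx : ∀ k, WeaklySummable 𝕂 (x k)) :
    Summable fun j => ‖P fun k => x k j‖ ^ q := by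
  classical
  obtain ⟨T, hT⟩ := hP
  obtain ⟨C, hC0, hC⟩ := hcot
  have hq0 : (0:ℝ) < q := lt_of_lt_of_le two_pos hq2
  choose K hK0 hKb using fun k => weakly_uniform_bound 𝕂 (x k) (hx k)
  set B : ℝ := ‖T‖ * ∏ i : (Σ k : Fin m, Fin (n k)), K i.1 with hBdef
  have hB0 : 0 ≤ B := mul_nonneg (norm_nonneg _) (Finset.prod_nonneg fun i _ => hK0 i.1)
  -- the key sign bound
  have key : ∀ (N : ℕ) (ε : Fin N → Bool),
      ‖∑ j : Fin N, (if ε j then (P fun k => x k (j:ℕ)) else -(P fun k => x k (j:ℕ)))‖ ≤ B := by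
    intro N ε
    set i0 : (Σ k : Fin m, Fin (n k)) := ⟨⟨0, hm⟩, ⟨0, hn _⟩⟩ with hi0def
    set e : Bool → 𝕂 := fun b => if b then 1 else -1 with hedef
    have he : ∀ b, ‖e b‖ = 1 := by intro b; cases b <;> simp [hedef]
    have hz : ∀ j : Fin N, (if ε j then (P fun k => x k (j:ℕ)) else -(P fun k => x k (j:ℕ)))
        = e (ε j) • (T fun i : (Σ k : Fin m, Fin (n k)) => x i.1 (j:ℕ)) := by
      intro j
      rw [hT]
      cases ε j <;> simp [hedef]
    set a : ((Σ k : Fin m, Fin (n k)) → Fin N → Bool) → (Σ k : Fin m, Fin (n k)) → Fin N → 𝕂 :=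
      fun r i j => if i = i0 then e (ε j) * ∏ l ∈ Finset.univ.erase i0, e (r l j) else e (r i j)
      with hadef
    set u : ((Σ k : Fin m, Fin (n k)) → Fin N → Bool) → ∀ i : (Σ k : Fin m, Fin (n k)), X i.1 :=
      fun r i => ∑ j : Fin N, a r i j • x i.1 (j:ℕ) with hudef
    have ha1 : ∀ r i j, ‖a r i j‖ ≤ 1 := by
      intro r i j
      by_cases h : i = i0
      · rw [hadef]
        simp only [if_pos h]
        rw [norm_mul, norm_prod, he]
        simp [he]
      · simp [hadef, h, he]
    have hu : ∀ r i, ‖u r i‖ ≤ K i.1 := by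
      intro r i
      exact hKb i.1 N (fun j => a r i j) (fun j => ha1 r i j)
    have hTu : ∀ r, ‖T (u r)‖ ≤ B := by
      intro r
      calc ‖T (u r)‖ ≤ ‖T‖ * ∏ i, ‖u r i‖ := T.le_opNorm _
        _ ≤ B := by
            rw [hBdef]
            exact mul_le_mul_of_nonneg_left
              (Finset.prod_le_prod (fun i _ => norm_nonneg _) (fun i _ => hu r i))
              (norm_nonneg T)
    -- expand T (u r) by multilinearity
    have hstepA : ∀ r, T (u r) = ∑ c : (Σ k : Fin m, Fin (n k)) → Fin N,
        (∏ i, a r i (c i)) • (T fun i => x i.1 ((c i) : ℕ)) := by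
      intro r
      have : T (u r) = T fun i => ∑ j : Fin N, a r i j • x i.1 (j:ℕ) := by rw [hudef]
      rw [this, T.map_sum]
      exact Finset.sum_congr rfl fun c _ => T.map_smul_univ _ _
    -- the coefficient factorization
    have hfac : ∀ (c : (Σ k : Fin m, Fin (n k)) → Fin N)
        (r : (Σ k : Fin m, Fin (n k)) → Fin N → Bool),
        (∏ i, a r i (c i))
          = ∏ i, (if i = i0 then e (ε (c i0)) else e (r i (c i0)) * e (r i (c i))) := by
      intro c r
      calc ∏ i, a r i (c i)
          = a r i0 (c i0) * ∏ i ∈ Finset.univ.erase i0, a r i (c i) :=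
            (Finset.mul_prod_erase _ _ (Finset.mem_univ i0)).symm
        _ = (e (ε (c i0)) * ∏ l ∈ Finset.univ.erase i0, e (r l (c i0))) *
              ∏ i ∈ Finset.univ.erase i0, e (r i (c i)) := by
            congr 1
            exact Finset.prod_congr rfl fun i hi => by
              simp only [hadef]
              rw [if_neg (Finset.ne_of_mem_erase hi)]
        _ = e (ε (c i0)) * ∏ i ∈ Finset.univ.erase i0, (e (r i (c i0)) * e (r i (c i))) := by
            rw [Finset.prod_mul_distrib]
            ring
        _ = ∏ i, (if i = i0 then e (ε (c i0)) else e (r i (c i0)) * e (r i (c i))) := by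
            rw [← Finset.mul_prod_erase Finset.univ
              (fun i => if i = i0 then e (ε (c i0)) else e (r i (c i0)) * e (r i (c i)))
              (Finset.mem_univ i0)]
            rw [if_pos rfl]
            congr 1
            exact Finset.prod_congr rfl fun i hi => (if_neg (Finset.ne_of_mem_erase hi)).symm
    -- sum over r of products of signs
    set W : 𝕂 := ((2:𝕂) ^ N) * ((2:𝕂) ^ N) ^ (Finset.univ.erase i0 :
        Finset (Σ k : Fin m, Fin (n k))).card with hWdef
    have hS : ∀ c : (Σ k : Fin m, Fin (n k)) → Fin N,
        (∑ r : (Σ k : Fin m, Fin (n k)) → Fin N → Bool, ∏ i, a r i (c i))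
        = if ∀ i, c i = c i0 then W * e (ε (c i0)) else 0 := by
      intro c
      simp_rw [hfac c]
      have h1 := Finset.prod_univ_sum (fun _ : (Σ k : Fin m, Fin (n k)) =>
          (Finset.univ : Finset (Fin N → Bool)))
        (fun i s => if i = i0 then e (ε (c i0)) else e (s (c i0)) * e (s (c i)))
      rw [Fintype.piFinset_univ] at h1
      rw [← h1]
      have hsumi : ∀ i : (Σ k : Fin m, Fin (n k)), i ≠ i0 →
          (∑ s : Fin N → Bool, e (s (c i0)) * e (s (c i)))
          = if c i = c i0 then (2:𝕂)^N else 0 := by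
        intro i hi
        have hrw : ∀ s : Fin N → Bool, e (s (c i0)) * e (s (c i))
            = ∏ j : Fin N, ((if j = c i0 then e (s j) else 1) * (if j = c i then e (s j) else 1)) := by
          intro s
          rw [Finset.prod_mul_distrib,
              Finset.prod_ite_eq' Finset.univ (c i0) (fun j => e (s j)),
              Finset.prod_ite_eq' Finset.univ (c i) (fun j => e (s j))]
          simp
        simp_rw [hrw]
        have h2 := Finset.prod_univ_sum (fun _ : Fin N => (Finset.univ : Finset Bool))
          (fun j b => (if j = c i0 then e b else 1) * (if j = c i then e b else 1))
        rw [Fintype.piFinset_univ] at h2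
        rw [← h2]
        by_cases hcc : c i = c i0
        · rw [if_pos hcc, hcc]
          calc ∏ j : Fin N, (∑ b : Bool,
                (if j = c i0 then e b else 1) * (if j = c i0 then e b else 1))
              = ∏ _j : Fin N, (2:𝕂) := Finset.prod_congr rfl (fun j _ => by
                  by_cases hj : j = c i0 <;> simp [hedef, hj] <;> norm_num)
            _ = (2:𝕂)^N := by simp
        · rw [if_neg hcc]
          apply Finset.prod_eq_zero (Finset.mem_univ (c i0))
          have hne : (c i0 : Fin N) ≠ c i := fun h => hcc h.symm
          simp [hedef, hne]
      by_cases hconst : ∀ i : (Σ k : Fin m, Fin (n k)), c i = c i0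
      · rw [if_pos hconst]
        calc ∏ i : (Σ k : Fin m, Fin (n k)), (∑ s : Fin N → Bool,
              if i = i0 then e (ε (c i0)) else e (s (c i0)) * e (s (c i)))
            = ∏ i : (Σ k : Fin m, Fin (n k)),
              (if i = i0 then (2:𝕂)^N * e (ε (c i0)) else (2:𝕂)^N) := by
              apply Finset.prod_congr rfl
              intro i _
              by_cases hi : i = i0
              · simp only [if_pos hi]
                rw [Finset.sum_const, Finset.card_univ]
                simp only [Fintype.card_fun, Fintype.card_bool, Fintype.card_fin, nsmul_eq_mul]
                push_cast
                ring
              · simp only [if_neg hi]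
                rw [hsumi i hi, if_pos (hconst i)]
          _ = ((2:𝕂)^N * e (ε (c i0))) * ∏ _i ∈ Finset.univ.erase i0, (2:𝕂)^N := by
              rw [← Finset.mul_prod_erase Finset.univ
                (fun i => if i = i0 then (2:𝕂)^N * e (ε (c i0)) else (2:𝕂)^N)
                (Finset.mem_univ i0)]
              rw [if_pos rfl]
              congr 1
              exact Finset.prod_congr rfl fun i hi => if_neg (Finset.ne_of_mem_erase hi)
          _ = W * e (ε (c i0)) := by
              rw [Finset.prod_const, hWdef]
              ring
      · rw [if_neg hconst]
        push_neg at hconst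
        obtain ⟨i, hi⟩ := hconst
        have hii0 : i ≠ i0 := by rintro rfl; exact hi rfl
        apply Finset.prod_eq_zero (Finset.mem_univ i)
        simp only [if_neg hii0]
        rw [hsumi i hii0, if_neg hi]
    -- the main identity
    have hfinal : ∑ r : (Σ k : Fin m, Fin (n k)) → Fin N → Bool, T (u r)
        = W • ∑ j : Fin N, e (ε j) • (T fun i => x i.1 (j:ℕ)) := by
      simp_rw [hstepA]
      rw [Finset.sum_comm]
      simp_rw [← Finset.sum_smul, hS, Finset.smul_sum]
      rw [← Finset.sum_subset (Finset.subset_univ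
        ((Finset.univ : Finset (Fin N)).image
          (fun (j : Fin N) (_ : Σ k : Fin m, Fin (n k)) => j))) ?_]
      · rw [Finset.sum_image (fun j _ j' _ h => congrFun h i0)]
        apply Finset.sum_congr rfl
        intro j _
        rw [if_pos (fun i => rfl), mul_smul]
      · intro c _ hc
        have hnc : ¬ (∀ i, c i = c i0) := by
          intro hconst
          apply hc
          rw [Finset.mem_image]
          exact ⟨c i0, Finset.mem_univ _, by funext i; exact (hconst i).symm⟩
        rw [if_neg hnc, zero_smul]
    -- norms
    have hcE : (Finset.univ.erase i0 : Finset (Σ k : Fin m, Fin (n k))).card + 1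
        = Fintype.card (Σ k : Fin m, Fin (n k)) := by
      rw [Finset.card_erase_of_mem (Finset.mem_univ i0), Finset.card_univ]
      have : 0 < Fintype.card (Σ k : Fin m, Fin (n k)) := Fintype.card_pos_iff.mpr ⟨i0⟩
      omega
    have hWr : ‖W‖ = ((2:ℝ)^N) * ((2:ℝ)^N) ^ (Finset.univ.erase i0 :
        Finset (Σ k : Fin m, Fin (n k))).card := by
      rw [hWdef, norm_mul, norm_pow, norm_pow, norm_pow, RCLike.norm_ofNat]
    have hcard : (Fintype.card ((Σ k : Fin m, Fin (n k)) → Fin N → Bool) : ℝ)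
        = ((2:ℝ)^N) * ((2:ℝ)^N) ^ (Finset.univ.erase i0 :
            Finset (Σ k : Fin m, Fin (n k))).card := by
      rw [Fintype.card_fun, Fintype.card_fun, Fintype.card_bool, Fintype.card_fin, ← hcE]
      push_cast
      ring
    have hkey2 : ‖W‖ * ‖∑ j : Fin N, e (ε j) • (T fun i => x i.1 (j:ℕ))‖ ≤ ‖W‖ * B := by
      rw [← norm_smul, ← hfinal]
      calc ‖∑ r : (Σ k : Fin m, Fin (n k)) → Fin N → Bool, T (u r)‖
          ≤ ∑ r : (Σ k : Fin m, Fin (n k)) → Fin N → Bool, ‖T (u r)‖ := norm_sum_le _ _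
        _ ≤ ∑ _r : (Σ k : Fin m, Fin (n k)) → Fin N → Bool, B :=
            Finset.sum_le_sum fun r _ => hTu r
        _ = (Fintype.card ((Σ k : Fin m, Fin (n k)) → Fin N → Bool) : ℝ) * B := by
            rw [Finset.sum_const, Finset.card_univ, nsmul_eq_mul]
        _ = ‖W‖ * B := by rw [hcard, hWr]
    have hWpos : 0 < ‖W‖ := by rw [hWr]; positivity
    have hres := le_of_mul_le_mul_left hkey2 hWpos
    simp_rw [hz]
    exact hres
  -- cotype application
  have main : ∀ N : ℕ, ∑ j ∈ Finset.range N, ‖P fun k => x k j‖ ^ q ≤ (C * B) ^ q := by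
    intro N
    have h1 := hC N (fun j : Fin N => P fun k => x k (j:ℕ))
    have h2 : C * Real.sqrt ((2 ^ N : ℝ)⁻¹ * ∑ ε : Fin N → Bool,
        ‖∑ j : Fin N, (if ε j then (P fun k => x k (j:ℕ)) else -(P fun k => x k (j:ℕ)))‖ ^ 2)
        ≤ C * B := by
      apply mul_le_mul_of_nonneg_left _ hC0
      rw [← Real.sqrt_sq hB0]
      apply Real.sqrt_le_sqrt
      have hsum : ∑ ε : Fin N → Bool,
          ‖∑ j : Fin N, (if ε j then (P fun k => x k (j:ℕ)) else -(P fun k => x k (j:ℕ)))‖ ^ 2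
          ≤ (2^N : ℝ) * B^2 := by
        calc ∑ ε : Fin N → Bool,
            ‖∑ j : Fin N, (if ε j then (P fun k => x k (j:ℕ)) else -(P fun k => x k (j:ℕ)))‖ ^ 2
            ≤ ∑ _ε : Fin N → Bool, B^2 := Finset.sum_le_sum fun ε _ =>
              pow_le_pow_left₀ (norm_nonneg _) (key N ε) 2
          _ = (2^N : ℝ) * B^2 := by
              rw [Finset.sum_const, Finset.card_univ, nsmul_eq_mul]
              simp only [Fintype.card_fun, Fintype.card_bool, Fintype.card_fin]
              push_cast
              ring
      calc (2^N:ℝ)⁻¹ * ∑ ε : Fin N → Bool,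
          ‖∑ j : Fin N, (if ε j then (P fun k => x k (j:ℕ)) else -(P fun k => x k (j:ℕ)))‖ ^ 2
          ≤ (2^N:ℝ)⁻¹ * ((2^N) * B^2) :=
            mul_le_mul_of_nonneg_left hsum (by positivity)
        _ = B^2 := by
            rw [← mul_assoc, inv_mul_cancel₀ (by positivity : (2:ℝ)^N ≠ 0), one_mul]
    have h3 : (∑ j : Fin N, ‖P fun k => x k (j:ℕ)‖ ^ q) ^ (1/q) ≤ C * B := le_trans h1 h2
    have hS0 : 0 ≤ ∑ j : Fin N, ‖P fun k => x k (j:ℕ)‖ ^ q :=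
      Finset.sum_nonneg fun j _ => Real.rpow_nonneg (norm_nonneg _) q
    have h4 := Real.rpow_le_rpow (Real.rpow_nonneg hS0 _) h3 (le_of_lt hq0)
    rw [← Real.rpow_mul hS0, one_div_mul_cancel (ne_of_gt hq0), Real.rpow_one] at h4
    calc ∑ j ∈ Finset.range N, ‖P fun k => x k j‖ ^ q
        = ∑ j : Fin N, ‖P fun k => x k (j:ℕ)‖ ^ q :=
          (Fin.sum_univ_eq_sum_range (fun j => ‖P fun k => x k j‖ ^ q) N).symm
      _ ≤ (C * B) ^ q := h4
  exact summable_of_sum_range_le (fun j => Real.rpow_nonneg (norm_nonneg _) q) main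
end

section
/- Let m ∈ ℕ and q > 0 with 2 ≤ mq < ∞. If a Banach space X has cotype mq, then for every Banach space Y, every continuous m-homogeneous polynomial P : X → Y is absolutely (q;1)-summing, i.e., ∑_j ‖P(x_j)‖^q < ∞ for every weakly 1-summable sequence (x_j) in X. -/
open scoped BigOperators

/-- `P` is a continuous `m`-homogeneous polynomial. -/
def IsHomogPoly (𝕂 : Type*) [RCLike 𝕂] {X Y : Type*} [NormedAddCommGroup X] [NormedSpace 𝕂 X]
    [NormedAddCommGroup Y] [NormedSpace 𝕂 Y] (m : ℕ) (P : X → Y) : Prop :=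
  ∃ T : ContinuousMultilinearMap 𝕂 (fun _ : Fin m => X) Y, ∀ x, P x = T fun _ => x

/-- unimodular "sign" of a scalar -/
noncomputable def mySgn {𝕂 : Type*} [RCLike 𝕂] (z : 𝕂) : 𝕂 :=
  if z = 0 then 1 else (‖z‖ : 𝕂) / z

lemma mySgn_norm_le {𝕂 : Type*} [RCLike 𝕂] (z : 𝕂) : ‖mySgn z‖ ≤ 1 := by
  unfold mySgn
  split
  · simp
  · rename_i h
    rw [norm_div, RCLike.norm_ofReal, abs_norm, div_self (norm_ne_zero_iff.mpr h)]

lemma mySgn_mul {𝕂 : Type*} [RCLike 𝕂] (z : 𝕂) : mySgn z * z = (‖z‖ : 𝕂) := by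
  unfold mySgn
  split
  · rename_i h; simp [h]
  · rename_i h; field_simp

lemma weak_bound (𝕂 : Type*) [RCLike 𝕂] {X : Type*} [NormedAddCommGroup X]
    [NormedSpace 𝕂 X] (x : ℕ → X) (hx : WeaklySummable 𝕂 x) :
    ∃ M : ℝ, 0 ≤ M ∧ ∀ (φ : X →L[𝕂] 𝕂) (n : ℕ),
      ∑ j ∈ Finset.range n, ‖φ (x j)‖ ≤ M * ‖φ‖ := by
  set e := NormedSpace.inclusionInDoubleDual 𝕂 X with he
  set g : (Σ n : ℕ, Fin n → {c : 𝕂 // ‖c‖ ≤ 1}) → ((X →L[𝕂] 𝕂) →L[𝕂] 𝕂) :=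
    fun p => ∑ j : Fin p.1, (p.2 j : 𝕂) • e (x j) with hg
  have key : ∀ φ : X →L[𝕂] 𝕂, ∀ p, ‖g p φ‖ ≤ ∑' j, ‖φ (x j)‖ := by
    rintro φ ⟨n, c⟩
    have h1 : ‖g ⟨n, c⟩ φ‖ ≤ ∑ j : Fin n, ‖φ (x (j : ℕ))‖ := by
      simp only [hg, ContinuousLinearMap.sum_apply, ContinuousLinearMap.smul_apply]
      refine (norm_sum_le _ _).trans (Finset.sum_le_sum fun j _ => ?_)
      rw [norm_smul]
      have : e (x (j : ℕ)) φ = φ (x (j : ℕ)) := rfl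
      rw [this]
      calc ‖(c j : 𝕂)‖ * ‖φ (x (j : ℕ))‖ ≤ 1 * ‖φ (x (j : ℕ))‖ :=
            mul_le_mul_of_nonneg_right (c j).2 (norm_nonneg _)
        _ = ‖φ (x (j : ℕ))‖ := one_mul _
    refine h1.trans ?_
    rw [Fin.sum_univ_eq_sum_range (fun j => ‖φ (x j)‖) n]
    exact Summable.sum_le_tsum _ (fun i _ => norm_nonneg _) (hx φ)
  obtain ⟨C, hC⟩ := banach_steinhaus (g := g) fun φ => ⟨∑' j, ‖φ (x j)‖, key φ⟩
  refine ⟨max C 0, le_max_right _ _, fun φ n => ?_⟩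
  set c : Fin n → {c : 𝕂 // ‖c‖ ≤ 1} := fun j => ⟨mySgn (φ (x (j : ℕ))), mySgn_norm_le _⟩
  have hval : g ⟨n, c⟩ φ = ((∑ j ∈ Finset.range n, ‖φ (x j)‖ : ℝ) : 𝕂) := by
    simp only [hg, ContinuousLinearMap.sum_apply, ContinuousLinearMap.smul_apply]
    have : ∀ j : Fin n, (c j : 𝕂) • e (x (j : ℕ)) φ = ((‖φ (x (j : ℕ))‖ : ℝ) : 𝕂) := by
      intro j
      have : e (x (j : ℕ)) φ = φ (x (j : ℕ)) := rfl
      rw [this]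
      simp only [c, smul_eq_mul]
      exact mySgn_mul _
    rw [Finset.sum_congr rfl fun j _ => this j]
    rw [← Fin.sum_univ_eq_sum_range (fun j => ‖φ (x j)‖) n]
    push_cast
    ring
  have : ∑ j ∈ Finset.range n, ‖φ (x j)‖ ≤ ‖g ⟨n, c⟩ φ‖ := by
    rw [hval, RCLike.norm_ofReal]
    exact le_abs_self _
  refine this.trans ?_
  calc ‖g ⟨n, c⟩ φ‖ ≤ ‖g ⟨n, c⟩‖ * ‖φ‖ := (g ⟨n, c⟩).le_opNorm φ
    _ ≤ max C 0 * ‖φ‖ := by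
        apply mul_le_mul_of_nonneg_right _ (norm_nonneg _)
        exact (hC ⟨n, c⟩).trans (le_max_left _ _)

/-- If `X` has cotype `mq`, then every continuous `m`-homogeneous polynomial from `X` into any
Banach space `Y` is absolutely `(q;1)`-summing. -/
theorem stmt5 (𝕂 : Type*) [RCLike 𝕂] (m : ℕ) (q : ℝ) (hq : 0 < q)
    (hmq : 2 ≤ (m : ℝ) * q)
    (X : Type*) [NormedAddCommGroup X] [NormedSpace 𝕂 X] [CompleteSpace X]
    (hcot : HasCotype X ((m : ℝ) * q))
    (Y : Type*) [NormedAddCommGroup Y] [NormedSpace 𝕂 Y] [CompleteSpace Y]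
    (P : X → Y) (hP : IsHomogPoly 𝕂 m P)
    (x : ℕ → X) (hx : WeaklySummable 𝕂 x) :
    Summable fun j => ‖P (x j)‖ ^ q := by
  obtain ⟨T, hT⟩ := hP
  obtain ⟨M, hM0, hM⟩ := weak_bound 𝕂 x hx
  obtain ⟨C, hC0, hCot⟩ := hcot
  set s : ℝ := (m : ℝ) * q with hs_def
  have hs : 0 < s := lt_of_lt_of_le two_pos hmq
  -- sign sums are uniformly bounded by M
  have hsign : ∀ (k : ℕ) (ε : Fin k → Bool),
      ‖∑ j : Fin k, (if ε j then x (j : ℕ) else -x (j : ℕ))‖ ≤ M := by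
    intro k ε
    apply NormedSpace.norm_le_dual_bound 𝕂 _ hM0
    intro φ
    rw [map_sum]
    refine (norm_sum_le _ _).trans ?_
    calc ∑ j : Fin k, ‖φ (if ε j then x (j : ℕ) else -x (j : ℕ))‖
        = ∑ j : Fin k, ‖φ (x (j : ℕ))‖ := by
          refine Finset.sum_congr rfl fun j _ => ?_
          split <;> simp
      _ = ∑ j ∈ Finset.range k, ‖φ (x j)‖ := Fin.sum_univ_eq_sum_range (fun j => ‖φ (x j)‖) k
      _ ≤ M * ‖φ‖ := hM φ k
  -- partial sums of ‖x j‖ ^ s are bounded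
  have hpart : ∀ k, ∑ j ∈ Finset.range k, ‖x j‖ ^ s ≤ (C * M) ^ s := by
    intro k
    have h1 := hCot k fun j => x (j : ℕ)
    have h2 : Real.sqrt ((2 ^ k : ℝ)⁻¹ *
        ∑ ε : Fin k → Bool, ‖∑ j : Fin k, (if ε j then x (j : ℕ) else -x (j : ℕ))‖ ^ 2) ≤ M := by
      have hsum : (∑ ε : Fin k → Bool,
          ‖∑ j : Fin k, (if ε j then x (j : ℕ) else -x (j : ℕ))‖ ^ 2) ≤ (2 ^ k : ℝ) * M ^ 2 := by
        calc (∑ ε : Fin k → Bool,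
              ‖∑ j : Fin k, (if ε j then x (j : ℕ) else -x (j : ℕ))‖ ^ 2)
            ≤ ∑ _ε : Fin k → Bool, M ^ 2 :=
              Finset.sum_le_sum fun ε _ =>
                pow_le_pow_left₀ (norm_nonneg _) (hsign k ε) 2
          _ = (2 ^ k : ℝ) * M ^ 2 := by
              rw [Finset.sum_const]
              simp [Finset.card_univ]
      calc Real.sqrt ((2 ^ k : ℝ)⁻¹ * ∑ ε : Fin k → Bool,
            ‖∑ j : Fin k, (if ε j then x (j : ℕ) else -x (j : ℕ))‖ ^ 2)
          ≤ Real.sqrt ((2 ^ k : ℝ)⁻¹ * ((2 ^ k : ℝ) * M ^ 2)) := by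
            apply Real.sqrt_le_sqrt
            apply mul_le_mul_of_nonneg_left hsum (by positivity)
        _ = M := by
            rw [inv_mul_cancel_left₀ (by positivity)]
            exact Real.sqrt_sq hM0
    have h3 : (∑ j : Fin k, ‖x (j : ℕ)‖ ^ s) ^ (1 / s) ≤ C * M :=
      h1.trans (mul_le_mul_of_nonneg_left h2 hC0)
    have hA0 : (0 : ℝ) ≤ ∑ j : Fin k, ‖x (j : ℕ)‖ ^ s :=
      Finset.sum_nonneg fun j _ => Real.rpow_nonneg (norm_nonneg _) s
    have h4 : ((∑ j : Fin k, ‖x (j : ℕ)‖ ^ s) ^ (1 / s)) ^ s ≤ (C * M) ^ s :=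
      Real.rpow_le_rpow (Real.rpow_nonneg hA0 _) h3 hs.le
    rw [← Real.rpow_mul hA0, one_div, inv_mul_cancel₀ hs.ne', Real.rpow_one] at h4
    calc ∑ j ∈ Finset.range k, ‖x j‖ ^ s
        = ∑ j : Fin k, ‖x (j : ℕ)‖ ^ s := (Fin.sum_univ_eq_sum_range _ k).symm
      _ ≤ (C * M) ^ s := h4
  have hsum : Summable fun j => ‖x j‖ ^ s :=
    summable_of_sum_range_le (fun n => Real.rpow_nonneg (norm_nonneg _) s) hpart
  have hsum2 : Summable fun j => ‖T‖ ^ q * ‖x j‖ ^ s := hsum.mul_left _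
  refine hsum2.of_nonneg_of_le (fun j => Real.rpow_nonneg (norm_nonneg _) q) fun j => ?_
  rw [hT]
  have hb : ‖T fun _ => x j‖ ≤ ‖T‖ * ‖x j‖ ^ m := by
    have h := T.le_opNorm fun _ => x j
    simpa using h
  calc ‖T fun _ => x j‖ ^ q ≤ (‖T‖ * ‖x j‖ ^ m) ^ q :=
        Real.rpow_le_rpow (norm_nonneg _) hb hq.le
    _ = ‖T‖ ^ q * (‖x j‖ ^ m) ^ q :=
        Real.mul_rpow (norm_nonneg _) (pow_nonneg (norm_nonneg _) m)
    _ = ‖T‖ ^ q * ‖x j‖ ^ s := by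
        rw [← Real.rpow_natCast (‖x j‖) m, ← Real.rpow_mul (norm_nonneg _)]
end

section
/- Let m ∈ ℕ and let Y be a Banach space having cotype q with 2 ≤ q < ∞. Then for all Banach spaces X₁,…,X_m, every continuous m-linear mapping T : X₁ × ⋯ × X_m → Y is absolutely (q;1)-summing, i.e., ∑_j ‖T(x_j^{(1)},…,x_j^{(m)})‖^q < ∞ whenever (x_j^{(k)})_j is weakly 1-summable in X_k for each k. -/
open scoped BigOperators

/-!
By Banach–Steinhaus, a weakly 1-summable sequence has bounded weak `ℓ₁`-norm:
`‖∑ⱼ cⱼ xⱼ‖ ≤ M` whenever `|cⱼ| ≤ 1`. A continuous multilinear map `T` preserves this property.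
Averaging over independent signs `εⱼ` in the first variable gives
`2ᴺ ∑ⱼ cⱼ T(xⱼ⁽¹⁾, …, xⱼ⁽ᵐ⁾) = ∑_ε ∑ⱼ εⱼ cⱼ T(∑ᵢ εᵢ xᵢ⁽¹⁾, xⱼ⁽²⁾, …, xⱼ⁽ᵐ⁾)`,
and induction on `m` bounds it by `‖T‖ ∏ₖ Mₖ`. Every Rademacher sum `∑_{j<N} ±T(xⱼ)` is then
bounded by a constant `D`, so cotype `q` gives `∑_{j<N} ‖T(xⱼ)‖^q ≤ (C D)^q` for every `N`.
-/

open Finset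

def boolSign (R : Type*) [Ring R] (b : Bool) : R := if b then 1 else -1

section Signs

variable {R : Type*} [Ring R]

@[simp]
lemma boolSign_not (b : Bool) : boolSign R (!b) = -boolSign R b := by
  cases b <;> simp [boolSign]

@[simp]
lemma boolSign_mul_self (b : Bool) : boolSign R b * boolSign R b = 1 := by
  cases b <;> simp [boolSign]

@[simp]
lemma norm_boolSign {𝕂 : Type*} [NormedRing 𝕂] [NormOneClass 𝕂] (b : Bool) :
    ‖boolSign 𝕂 b‖ = 1 := by
  cases b <;> simp [boolSign]

lemma boolSign_smul {M : Type*} [AddCommGroup M] [Module R M] (b : Bool) (y : M) :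
    boolSign R b • y = if b then y else -y := by
  cases b <;> simp [boolSign]

lemma sum_boolSign_mul_boolSign {ι : Type*} [Fintype ι] [DecidableEq ι] (a b : ι) :
    ∑ ε : ι → Bool, boolSign R (ε a) * boolSign R (ε b) =
      if a = b then (Fintype.card (ι → Bool) : R) else 0 := by
  split_ifs with hab
  · simp [hab]
  · refine sum_ninvolution (fun ε => Function.update ε a (!ε a)) (fun ε => ?_)
      (fun ε _ h => ?_) (fun _ => mem_univ _) (fun ε => by simp)
    · simp [Function.update_of_ne (Ne.symm hab)]
    · simpa using congrFun h a

end Signs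

lemma card_smul_sum_eq_sum_boolSign {R : Type*} [CommRing R] {ι : Type*} [Fintype ι]
    [DecidableEq ι] {E G : Type*} [AddCommGroup E] [Module R E] [AddCommGroup G] [Module R G]
    (L : ι → E →ₗ[R] G) (u : ι → E) (c : ι → R) :
    (Fintype.card (ι → Bool) : R) • ∑ j, c j • L j (u j) =
      ∑ ε : ι → Bool, ∑ j, (boolSign R (ε j) * c j) • L j (∑ i, boolSign R (ε i) • u i) := by
  simp_rw [map_sum, map_smul, smul_sum, smul_smul]
  rw [sum_comm]
  refine sum_congr rfl fun j _ => ?_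
  rw [sum_comm]
  simp_rw [← sum_smul, mul_right_comm _ (c j), ← sum_mul, sum_boolSign_mul_boolSign, ite_mul,
    zero_mul, ite_smul, zero_smul, sum_ite_eq, if_pos (mem_univ _)]

section WeakOneNorm

variable (𝕂 : Type*) [RCLike 𝕂] {X : Type*} [NormedAddCommGroup X] [NormedSpace 𝕂 X]

/-- The weak `ℓ₁`-norm `sup_{‖φ‖ ≤ 1} ∑ⱼ ‖φ vⱼ‖ = sup_{|cⱼ| ≤ 1} ‖∑ⱼ cⱼ vⱼ‖` of `v` is
at most `M`. -/
def WeakOneNormLE {ι : Type*} [Fintype ι] (v : ι → X) (M : ℝ) : Prop :=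
  ∀ c : ι → 𝕂, (∀ j, ‖c j‖ ≤ 1) → ‖∑ j, c j • v j‖ ≤ M

variable {𝕂}

lemma WeakOneNormLE.nonneg {ι : Type*} [Fintype ι] {v : ι → X} {M : ℝ}
    (h : WeakOneNormLE 𝕂 v M) : 0 ≤ M := by
  simpa using h 0 (by simp)

lemma WeakOneNormLE.norm_sum_boolSign_smul_le {ι : Type*} [Fintype ι] {v : ι → X} {M : ℝ}
    (h : WeakOneNormLE 𝕂 v M) (ε : ι → Bool) : ‖∑ j, boolSign 𝕂 (ε j) • v j‖ ≤ M :=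
  h _ fun j => (norm_boolSign (ε j)).le

theorem WeaklySummable.exists_weakOneNormLE {x : ℕ → X} (hx : WeaklySummable 𝕂 x) :
    ∃ M, ∀ N, WeakOneNormLE 𝕂 (fun j : Fin N => x j) M := by
  let z : (Σ N, {c : Fin N → 𝕂 // ∀ j, ‖c j‖ ≤ 1}) → X := fun p => ∑ j, p.2.1 j • x j
  have hbdd (φ : StrongDual 𝕂 X) : ∃ C, ∀ p,
      ‖NormedSpace.inclusionInDoubleDualLi 𝕂 (z p) φ‖ ≤ C := by
    refine ⟨∑' j, ‖φ (x j)‖, fun ⟨N, c, hc⟩ => ?_⟩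
    calc ‖φ (∑ j, c j • x j)‖ ≤ ∑ j : Fin N, ‖φ (x j)‖ := by
          simp only [map_sum, map_smul, smul_eq_mul]
          refine (norm_sum_le _ _).trans (sum_le_sum fun j _ => ?_)
          rw [norm_mul]
          exact mul_le_of_le_one_left (norm_nonneg _) (hc j)
      _ = ∑ j ∈ range N, ‖φ (x j)‖ := Fin.sum_univ_eq_sum_range (fun j => ‖φ (x j)‖) N
      _ ≤ ∑' j, ‖φ (x j)‖ := (hx φ).sum_le_tsum _ fun j _ => norm_nonneg _
  obtain ⟨M, hM⟩ := banach_steinhaus hbdd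
  refine ⟨M, fun N c hc => ?_⟩
  simpa [z, LinearIsometry.norm_map] using hM ⟨N, c, hc⟩

lemma norm_le_of_card_smul_eq_sum {α : Type*} [Fintype α] [Nonempty α] {a : X} {b : α → X}
    {K : ℝ} (h : (Fintype.card α : 𝕂) • a = ∑ i, b i) (hb : ∀ i, ‖b i‖ ≤ K) : ‖a‖ ≤ K := by
  have hcard : (0 : ℝ) < Fintype.card α := by exact_mod_cast Fintype.card_pos
  refine le_of_mul_le_mul_left ?_ hcard
  calc (Fintype.card α : ℝ) * ‖a‖ = ‖∑ i, b i‖ := by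
        rw [← h, norm_smul, RCLike.norm_natCast]
    _ ≤ ∑ i, ‖b i‖ := norm_sum_le _ _
    _ ≤ Fintype.card α * K := by
        simpa using sum_le_card_nsmul univ (fun i => ‖b i‖) K fun i _ => hb i

end WeakOneNorm

namespace ContinuousMultilinearMap

variable {𝕂 : Type*} [RCLike 𝕂] {Y : Type*} [NormedAddCommGroup Y] [NormedSpace 𝕂 Y]
  {ι : Type*} [Fintype ι]

lemma weakOneNormLE_apply_of_fin_one {X : Fin 1 → Type*} [∀ k, NormedAddCommGroup (X k)]
    [∀ k, NormedSpace 𝕂 (X k)] (T : ContinuousMultilinearMap 𝕂 X Y) {v : ∀ k, ι → X k}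
    {M : Fin 1 → ℝ} (hv : ∀ k, WeakOneNormLE 𝕂 (v k) (M k)) :
    WeakOneNormLE 𝕂 (fun j => T fun k => v k j) (‖T‖ * ∏ k, M k) := by
  intro c hc
  let L := T.toMultilinearMap.toLinearMap 0 0
  have hL (w : X 0) : ‖L w‖ ≤ ‖T‖ * ‖w‖ := by
    simpa [L] using T.le_opNorm (Function.update 0 0 w)
  have hvL (j : ι) : (T fun k => v k j) = L (v 0 j) := by
    refine congrArg T (funext fun k => ?_)
    rw [Fin.fin_one_eq_zero k, Function.update_self]
  calc ‖∑ j, c j • T fun k => v k j‖ = ‖L (∑ j, c j • v 0 j)‖ := by simp [hvL]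
    _ ≤ ‖T‖ * ‖∑ j, c j • v 0 j‖ := hL _
    _ ≤ ‖T‖ * ∏ k, M k := by
        rw [Fin.prod_univ_one]
        exact mul_le_mul_of_nonneg_left (hv 0 c hc) (norm_nonneg T)

theorem weakOneNormLE_apply {n : ℕ} {X : Fin (n + 1) → Type*} [∀ k, NormedAddCommGroup (X k)]
    [∀ k, NormedSpace 𝕂 (X k)] (T : ContinuousMultilinearMap 𝕂 X Y) {v : ∀ k, ι → X k}
    {M : Fin (n + 1) → ℝ} (hv : ∀ k, WeakOneNormLE 𝕂 (v k) (M k)) :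
    WeakOneNormLE 𝕂 (fun j => T fun k => v k j) (‖T‖ * ∏ k, M k) := by
  classical
  induction n with
  | zero => exact weakOneNormLE_apply_of_fin_one T hv
  | succ n ih =>
    intro c hc
    let u (ε : ι → Bool) : X 0 := ∑ i, boolSign 𝕂 (ε i) • v 0 i
    let S (ε : ι → Bool) : Y :=
      ∑ j, (boolSign 𝕂 (ε j) * c j) • T.curryLeft (u ε) fun k => v k.succ j
    have hS (ε : ι → Bool) : ‖S ε‖ ≤ ‖T‖ * ∏ k, M k := by
      have hc' (j : ι) : ‖boolSign 𝕂 (ε j) * c j‖ ≤ 1 := by simpa using hc j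
      have hTε : ‖T.curryLeft (u ε)‖ ≤ ‖T‖ * M 0 := by
        grw [T.curryLeft.le_opNorm, curryLeft_norm, (hv 0).norm_sum_boolSign_smul_le ε]
      calc ‖S ε‖ ≤ ‖T.curryLeft (u ε)‖ * ∏ k : Fin (n + 1), M k.succ :=
            ih _ (fun k => hv k.succ) _ hc'
        _ ≤ ‖T‖ * M 0 * ∏ k : Fin (n + 1), M k.succ := by
            grw [hTε]
            exact prod_nonneg fun k _ => (hv k.succ).nonneg
        _ = ‖T‖ * ∏ k, M k := by rw [mul_assoc, ← Fin.prod_univ_succ]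
    have hT (w : X 0) (j : ι) :
        T.curryLeft w (fun k => v k.succ j) = T.toMultilinearMap.toLinearMap (v · j) 0 w := by
      have hcons : (v · j) = Fin.cons (v 0 j) fun k => v k.succ j := (Fin.cons_self_tail _).symm
      rw [MultilinearMap.toLinearMap_apply, hcons, Fin.update_cons_zero]
      rfl
    have havg : (Fintype.card (ι → Bool) : 𝕂) • ∑ j, c j • (T fun k => v k j) = ∑ ε, S ε := by
      simp only [S, u, hT]
      rw [← card_smul_sum_eq_sum_boolSign]
      simp
    exact norm_le_of_card_smul_eq_sum havg hS

end ContinuousMultilinearMap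

theorem HasCotype.summable_norm_rpow_s8 {𝕂 : Type*} [RCLike 𝕂] {Y : Type*} [NormedAddCommGroup Y]
    [NormedSpace 𝕂 Y] {q : ℝ} (hY : HasCotype Y q) (hq : 0 < q) {y : ℕ → Y} {D : ℝ}
    (hy : ∀ N, WeakOneNormLE 𝕂 (fun j : Fin N => y j) D) :
    Summable fun j => ‖y j‖ ^ q := by
  obtain ⟨C, hC, hCot⟩ := hY
  refine summable_of_sum_range_le (c := (C * D) ^ q) (fun j => by positivity) fun N => ?_
  have hsign (ε : Fin N → Bool) : ‖∑ j, (if ε j then y j else -y j)‖ ^ 2 ≤ D ^ 2 := by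
    simp_rw [← boolSign_smul (R := 𝕂)]
    exact pow_le_pow_left₀ (norm_nonneg _) ((hy N).norm_sum_boolSign_smul_le ε) 2
  have hrad : Real.sqrt ((2 ^ N : ℝ)⁻¹ *
      ∑ ε : Fin N → Bool, ‖∑ j, (if ε j then y j else -y j)‖ ^ 2) ≤ D := by
    refine Real.sqrt_le_iff.mpr ⟨(hy N).nonneg, ?_⟩
    grw [sum_le_card_nsmul univ _ _ fun ε _ => hsign ε]
    simp
  have hcot : (∑ j : Fin N, ‖y j‖ ^ q) ^ q⁻¹ ≤ C * D := by
    grw [← one_div, hCot N (y ·), hrad]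
  rw [← Fin.sum_univ_eq_sum_range (fun j => ‖y j‖ ^ q)]
  exact (Real.rpow_inv_le_iff_of_pos (by positivity) (mul_nonneg hC (hy 0).nonneg) hq).mp hcot

theorem stmt8_general (𝕂 : Type*) [RCLike 𝕂] (m : ℕ) (hm : 0 < m)
    (Y : Type*) [NormedAddCommGroup Y] [NormedSpace 𝕂 Y]
    (q : ℝ) (hq2 : 2 ≤ q) (hcot : HasCotype Y q)
    (X : Fin m → Type*) [∀ k, NormedAddCommGroup (X k)]
    [∀ k, NormedSpace 𝕂 (X k)]
    (T : ContinuousMultilinearMap 𝕂 X Y)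
    (x : ∀ k, ℕ → X k) (hx : ∀ k, WeaklySummable 𝕂 (x k)) :
    Summable fun j => ‖T fun k => x k j‖ ^ q := by
  obtain ⟨n, rfl⟩ := Nat.exists_eq_add_one_of_ne_zero hm.ne'
  choose M hM using fun k => (hx k).exists_weakOneNormLE
  exact hcot.summable_norm_rpow_s8 (by linarith)
    fun N => T.weakOneNormLE_apply (v := fun k (j : Fin N) => x k j) fun k => hM k N

/-- If `Y` has cotype `q`, then every continuous `m`-linear mapping into `Y` is absolutely
`(q;1)`-summing. -/
theorem stmt8 (𝕂 : Type*) [RCLike 𝕂] (m : ℕ) (hm : 0 < m)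
    (Y : Type*) [NormedAddCommGroup Y] [NormedSpace 𝕂 Y] [CompleteSpace Y]
    (q : ℝ) (hq2 : 2 ≤ q) (hcot : HasCotype Y q)
    (X : Fin m → Type*) [∀ k, NormedAddCommGroup (X k)]
    [∀ k, NormedSpace 𝕂 (X k)] [∀ k, CompleteSpace (X k)]
    (T : ContinuousMultilinearMap 𝕂 X Y)
    (x : ∀ k, ℕ → X k) (hx : ∀ k, WeaklySummable 𝕂 (x k)) :
    Summable fun j => ‖T fun k => x k j‖ ^ q :=
  stmt8_general 𝕂 m hm Y q hq2 hcot X T x hx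
end
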